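/- Let E(θ,c,t) = exp(t(cos θ·q1 + sin θ·q2 + c·h))·exp(−t·c·h), with entries g₁₁, g₁₂, g₂₁, g₂₂. Then for all θ, c, t ∈ ℝ one has (g₁₁ − g₂₂)² + (g₁₂ + g₂₁)² = r(c,t)², where r(c,t) = 2·sinh(√(1−c²)·t/2)/√(1−c²) if c² < 1, r(c,t) = t if c² = 1, and r(c,t) = 2·sin(√(c²−1)·t/2)/√(c²−1) if c² > 1. -/

import Mathlib

/-!
`(g₁₁ - g₂₂)² + (g₁₂ + g₂₁)²` only sees the part of `g` anticommuting with `J = [[0, -1], [1, 0]]`,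
and right multiplication by a rotation `exp(s h)` preserves it, so the factor `exp(-t c h)` drops
out. The generator `X = t(cos θ q₁ + sin θ q₂ + c h)` is traceless with `X² = t²(1 - c²)/4`,
hence `exp X = C + S X` with scalars `C, S`. The scalar `C` is invisible to the invariant and
`X` contributes `t²`, leaving `t² S²`; in each of the three regimes of `c²`, `t S` is `r(c, t)`.
-/

open Matrix Real

noncomputable def q1 : Matrix (Fin 2) (Fin 2) ℝ := (1/2 : ℝ) • !![1, 0; 0, -1]
noncomputable def q2 : Matrix (Fin 2) (Fin 2) ℝ := (1/2 : ℝ) • !![0, 1; 1, 0]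
noncomputable def h : Matrix (Fin 2) (Fin 2) ℝ := (1/2 : ℝ) • !![0, -1; 1, 0]

/-- The sub-Riemannian exponential map on `SL(2)`. -/
noncomputable def E (θ c t : ℝ) : Matrix (Fin 2) (Fin 2) ℝ :=
  NormedSpace.exp (t • (Real.cos θ • q1 + Real.sin θ • q2 + c • h))
    * NormedSpace.exp ((-(t * c)) • h)

/-- The invariant `r(c,t)` of the geodesics of `SL(2)`. -/
noncomputable def r (c t : ℝ) : ℝ :=
  if c ^ 2 < 1 then 2 * Real.sinh (Real.sqrt (1 - c ^ 2) * t / 2) / Real.sqrt (1 - c ^ 2)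
  else if c ^ 2 = 1 then t
  else 2 * Real.sin (Real.sqrt (c ^ 2 - 1) * t / 2) / Real.sqrt (c ^ 2 - 1)

open NormedSpace
open scoped Nat

/-- `coshSqrt d = cosh √d` and `sinhcSqrt d = sinh √d / √d`, read as `cos √-d` and
`sin √-d / √-d` when `d < 0`; they are the coefficients of `exp x` when `x² = d`. -/
noncomputable def coshSqrt (d : ℝ) : ℝ := ∑' k : ℕ, d ^ k / (2 * k)!

noncomputable def sinhcSqrt (d : ℝ) : ℝ := ∑' k : ℕ, d ^ k / (2 * k + 1)!

theorem summable_pow_div_factorial_of_le (d : ℝ) {f : ℕ → ℕ} (hf : ∀ k, k ≤ f k) :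
    Summable fun k : ℕ => d ^ k / (f k)! := by
  refine .of_norm <| (Real.summable_pow_div_factorial |d|).of_nonneg_of_le
    (fun _ => norm_nonneg _) fun k => ?_
  rw [norm_div, norm_pow, Real.norm_eq_abs, Real.norm_natCast]
  gcongr
  exact hf k

theorem hasSum_coshSqrt (d : ℝ) : HasSum (fun k : ℕ => d ^ k / (2 * k)!) (coshSqrt d) :=
  (summable_pow_div_factorial_of_le d (f := (2 * ·)) fun k => by omega).hasSum

theorem hasSum_sinhcSqrt (d : ℝ) : HasSum (fun k : ℕ => d ^ k / (2 * k + 1)!) (sinhcSqrt d) :=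
  (summable_pow_div_factorial_of_le d (f := (2 * · + 1)) fun k => by omega).hasSum

theorem exp_eq_of_mul_self_eq_smul_one {A : Type*} [Ring A] [Algebra ℝ A] [TopologicalSpace A]
    [IsTopologicalRing A] [ContinuousSMul ℝ A] [T2Space A] {x : A} {d : ℝ}
    (hx : x * x = d • 1) : exp x = coshSqrt d • 1 + sinhcSqrt d • x := by
  have pow_even (k : ℕ) : x ^ (2 * k) = d ^ k • (1 : A) := by
    rw [pow_mul, sq, hx, smul_pow, one_pow]
  rw [exp_eq_tsum ℝ]
  refine (HasSum.even_add_odd ?_ ?_).tsum_eq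
  · convert (hasSum_coshSqrt d).smul_const (1 : A) using 2 with k
    rw [pow_even, smul_smul, div_eq_inv_mul]
  · convert (hasSum_sinhcSqrt d).smul_const x using 2 with k
    rw [pow_succ, pow_even, smul_mul_assoc, one_mul, smul_smul, div_eq_inv_mul]

theorem coshSqrt_neg_sq (u : ℝ) : coshSqrt (-u ^ 2) = cos u := by
  rw [cos_eq_tsum, coshSqrt]
  congr 1 with k
  rw [neg_pow, ← pow_mul]

theorem mul_sinhcSqrt_neg_sq (u : ℝ) : u * sinhcSqrt (-u ^ 2) = sin u := by
  rw [sin_eq_tsum, sinhcSqrt, ← tsum_mul_left]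
  congr 1 with k
  rw [neg_pow, ← pow_mul, pow_succ]
  ring

theorem mul_sinhcSqrt_sq (u : ℝ) : u * sinhcSqrt (u ^ 2) = sinh u := by
  rw [sinh_eq_tsum, sinhcSqrt, ← tsum_mul_left]
  congr 1 with k
  rw [← pow_mul, pow_succ]
  ring

theorem sinhcSqrt_zero : sinhcSqrt 0 = 1 := by
  rw [sinhcSqrt, tsum_eq_single 0 fun k hk => by simp [zero_pow hk]]
  simp

theorem r_eq_mul_sinhcSqrt (c t : ℝ) : r c t = t * sinhcSqrt (t ^ 2 * (1 - c ^ 2) / 4) := by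
  rcases lt_trichotomy (c ^ 2) 1 with hc | hc | hc
  · have hu : sqrt (1 - c ^ 2) ≠ 0 := (sqrt_pos.mpr (by linarith)).ne'
    have hd : t ^ 2 * (1 - c ^ 2) / 4 = (sqrt (1 - c ^ 2) * t / 2) ^ 2 := by
      linear_combination (-t ^ 2 / 4) * sq_sqrt (by linarith : 0 ≤ 1 - c ^ 2)
    rw [r, if_pos hc, hd, ← mul_sinhcSqrt_sq]
    field_simp
  · rw [r, if_neg hc.not_lt, if_pos hc, hc, sub_self, mul_zero, zero_div, sinhcSqrt_zero, mul_one]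
  · have hu : sqrt (c ^ 2 - 1) ≠ 0 := (sqrt_pos.mpr (by linarith)).ne'
    have hd : t ^ 2 * (1 - c ^ 2) / 4 = -(sqrt (c ^ 2 - 1) * t / 2) ^ 2 := by
      linear_combination (t ^ 2 / 4) * sq_sqrt (by linarith : 0 ≤ c ^ 2 - 1)
    rw [r, if_neg (by linarith), if_neg hc.ne', hd, ← mul_sinhcSqrt_neg_sq]
    field_simp

section AntiConformal

variable {R : Type*} [CommRing R]

/-- Twice the squared Frobenius norm of the part of `g` that anticommutes with `!![0, -1; 1, 0]`. -/
def antiConformalNormSq (g : Matrix (Fin 2) (Fin 2) R) : R :=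
  (g 0 0 - g 1 1) ^ 2 + (g 0 1 + g 1 0) ^ 2

theorem antiConformalNormSq_mul_conformal (g : Matrix (Fin 2) (Fin 2) R) (a b : R) :
    antiConformalNormSq (g * !![a, -b; b, a]) = (a ^ 2 + b ^ 2) * antiConformalNormSq g := by
  simp only [antiConformalNormSq, mul_apply, Fin.sum_univ_two, of_apply, cons_val', cons_val_zero,
    cons_val_one, empty_val', cons_val_fin_one]
  ring

theorem antiConformalNormSq_smul_one_add_smul (a b : R) (g : Matrix (Fin 2) (Fin 2) R) :
    antiConformalNormSq (a • 1 + b • g) = b ^ 2 * antiConformalNormSq g := by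
  simp only [antiConformalNormSq, Matrix.add_apply, Matrix.smul_apply, one_apply_eq,
    one_apply_ne zero_ne_one, one_apply_ne one_ne_zero, smul_eq_mul]
  ring

theorem antiConformalNormSq_smul (a : R) (g : Matrix (Fin 2) (Fin 2) R) :
    antiConformalNormSq (a • g) = a ^ 2 * antiConformalNormSq g := by
  simp only [antiConformalNormSq, Matrix.smul_apply, smul_eq_mul]
  ring

end AntiConformal

theorem exp_smul_h (s : ℝ) :
    exp (s • h) = !![cos (s / 2), -sin (s / 2); sin (s / 2), cos (s / 2)] := by
  have hsq : (s • h) * (s • h) = (-(s / 2) ^ 2) • 1 := by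
    ext i j; fin_cases i <;> fin_cases j <;> simp [h, mul_apply, Fin.sum_univ_two] <;> ring
  rw [exp_eq_of_mul_self_eq_smul_one hsq, coshSqrt_neg_sq, ← mul_sinhcSqrt_neg_sq]
  ext i j; fin_cases i <;> fin_cases j <;> simp [h] <;> ring

theorem generator_mul_self (θ c : ℝ) :
    (cos θ • q1 + sin θ • q2 + c • h) * (cos θ • q1 + sin θ • q2 + c • h) =
      ((1 - c ^ 2) / 4) • 1 := by
  ext i j
  fin_cases i <;> fin_cases j <;> simp [q1, q2, h, mul_apply, Fin.sum_univ_two] <;>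
    linarith [sin_sq_add_cos_sq θ]

theorem antiConformalNormSq_generator (θ c : ℝ) :
    antiConformalNormSq (cos θ • q1 + sin θ • q2 + c • h) = 1 := by
  simp [antiConformalNormSq, q1, q2, h]
  linear_combination sin_sq_add_cos_sq θ

/-- For the geodesics of `SL(2)`, `(g₁₁ - g₂₂)² + (g₁₂ + g₂₁)² = r(c,t)²`. -/
theorem sl2_r_invariant (θ c t : ℝ) :
    (E θ c t 0 0 - E θ c t 1 1) ^ 2 + (E θ c t 0 1 + E θ c t 1 0) ^ 2 = r c t ^ 2 := by
  have hsq : (t • (cos θ • q1 + sin θ • q2 + c • h)) * (t • (cos θ • q1 + sin θ • q2 + c • h)) =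
      (t ^ 2 * (1 - c ^ 2) / 4) • 1 := by
    rw [smul_mul_smul, generator_mul_self, smul_smul]
    congr 1
    ring
  show antiConformalNormSq (E θ c t) = r c t ^ 2
  rw [E, exp_smul_h, antiConformalNormSq_mul_conformal, exp_eq_of_mul_self_eq_smul_one hsq,
    antiConformalNormSq_smul_one_add_smul, antiConformalNormSq_smul, antiConformalNormSq_generator,
    r_eq_mul_sinhcSqrt, cos_sq_add_sin_sq]
  ring
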